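/- Under the admissible-error assumption, the MOPO policy π̂ satisfies η_M(π̂) ≥ η_M(π*) − 2λ·ε_u(π*), where π* is an optimal policy for the true MDP M. In particular, if u(s,a) = 0 for all (s,a) visited under ρ^{π*}_{T̂}, then η_M(π̂) = η_M(π*). -/

import Mathlib

/-! Telescoping the true value function `V = value γ T π r` along the model's state
distributions `d_t` gives the simulation lemma `η_M(π) = η_{M̂}(π) - γ · Ē_{ρ^π_{T̂}}[G^π]`: by the
Bellman equation `Σ_s d_t(s) V(s) - γ Σ_s d_{t+1}(s) V(s)` is the expected reward at time `t` minus
`γ` times the expectation of `G^π` under `d_t`. With the admissible-error bound this yields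
`|η_M(π) - η_{M̂}(π)| ≤ λ ε_u(π)` for every policy, and the lower bound at `π̂`, the optimality
of `π̂` for the penalized return and the upper bound at `π*` chain to the inequality. If `u`
vanishes where `ρ^{π*}_{T̂}` does not, then `ε_u(π*) = 0`, and optimality of `π*` gives equality. -/

open scoped BigOperators
open Filter Topology Classical

section MDP

variable {S A : Type*} [Fintype S] [Fintype A]

/-- π is a valid stochastic policy. -/
def IsPolicy (π : S → A → ℝ) : Prop :=
  (∀ s a, 0 ≤ π s a) ∧ ∀ s, ∑ a, π s a = 1

/-- T is a valid transition kernel. -/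
def IsKernel (T : S → A → S → ℝ) : Prop :=
  (∀ s a s', 0 ≤ T s a s') ∧ ∀ s a, ∑ s', T s a s' = 1

/-- μ is a probability distribution on states. -/
def IsDist (μ : S → ℝ) : Prop :=
  (∀ s, 0 ≤ μ s) ∧ ∑ s, μ s = 1

/-- Distribution of the state at time t under policy π and dynamics T, from μ0. -/
def stateDist (T : S → A → S → ℝ) (π : S → A → ℝ) (μ0 : S → ℝ) : ℕ → S → ℝ
  | 0 => μ0
  | t + 1 => fun s' => ∑ s, ∑ a, stateDist T π μ0 t s * π s a * T s a s'

/-- Unnormalized discounted occupancy measure ρ^π_T(s,a). -/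
noncomputable def occupancy (γ : ℝ) (T : S → A → S → ℝ) (π : S → A → ℝ)
    (μ0 : S → ℝ) (s : S) (a : A) : ℝ :=
  π s a * ∑' t : ℕ, γ ^ t * stateDist T π μ0 t s

/-- Improper expectation Ē of f with respect to the occupancy measure. -/
noncomputable def expOcc (γ : ℝ) (T : S → A → S → ℝ) (π : S → A → ℝ)
    (μ0 : S → ℝ) (f : S → A → ℝ) : ℝ :=
  ∑ s, ∑ a, occupancy γ T π μ0 s a * f s a

/-- Expected discounted return η_M(π). -/
noncomputable def ret (γ : ℝ) (T : S → A → S → ℝ) (π : S → A → ℝ)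
    (μ0 : S → ℝ) (r : S → A → ℝ) : ℝ :=
  ∑' t : ℕ, γ ^ t * ∑ s, ∑ a, stateDist T π μ0 t s * π s a * r s a

/-- Value function V_M^π(s): return starting from the Dirac distribution at s. -/
noncomputable def value (γ : ℝ) (T : S → A → S → ℝ) (π : S → A → ℝ)
    (r : S → A → ℝ) (s0 : S) : ℝ :=
  ret γ T π (fun s => if s = s0 then 1 else 0) r

/-- G^π(s,a) = E_{s'∼T̂(s,a)}[V_M^π(s')] − E_{s'∼T(s,a)}[V_M^π(s')]. -/
noncomputable def Gpi (γ : ℝ) (T Th : S → A → S → ℝ) (π : S → A → ℝ)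
    (r : S → A → ℝ) (s : S) (a : A) : ℝ :=
  (∑ s', Th s a s' * value γ T π r s') - ∑ s', T s a s' * value γ T π r s'

/-- Total variation distance between two distributions on a finite set. -/
noncomputable def tvDist (P Q : S → ℝ) : ℝ :=
  ⨆ E : Finset S, |(∑ s ∈ E, P s) - ∑ s ∈ E, Q s|

/-- Integral probability metric induced by a function class F. -/
noncomputable def ipm (F : Set (S → ℝ)) (P Q : S → ℝ) : ℝ :=
  sSup {x : ℝ | ∃ f ∈ F, x = |(∑ s, P s * f s) - ∑ s, Q s * f s|}

def jointExp (μ : S → ℝ) (π : S → A → ℝ) (f : S → A → ℝ) : ℝ :=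
  ∑ s, ∑ a, μ s * π s a * f s a

def stepDist (T : S → A → S → ℝ) (π : S → A → ℝ) (μ : S → ℝ) (s' : S) : ℝ :=
  jointExp μ π fun s a => T s a s'

noncomputable def dirac (s₀ : S) : S → ℝ := fun s => if s = s₀ then 1 else 0

lemma stateDist_succ (T : S → A → S → ℝ) (π : S → A → ℝ) (μ : S → ℝ) (t : ℕ) :
    stateDist T π μ (t + 1) = stepDist T π (stateDist T π μ t) :=
  rfl

lemma stateDist_succ' (T : S → A → S → ℝ) (π : S → A → ℝ) (μ : S → ℝ) (t : ℕ) :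
    stateDist T π μ (t + 1) = stateDist T π (stepDist T π μ) t := by
  induction t with
  | zero => rfl
  | succ t ih => rw [stateDist_succ, ih, ← stateDist_succ]

lemma jointExp_sub (μ : S → ℝ) (π : S → A → ℝ) (f g : S → A → ℝ) :
    jointExp μ π (fun s a => f s a - g s a) = jointExp μ π f - jointExp μ π g := by
  simp only [jointExp, mul_sub, Finset.sum_sub_distrib]

lemma jointExp_sum_mul_left {ι : Type*} [Fintype ι] (c : ι → ℝ) (ν : ι → S → ℝ)
    (π : S → A → ℝ) (f : S → A → ℝ) :
    jointExp (fun s => ∑ i, c i * ν i s) π f = ∑ i, c i * jointExp (ν i) π f := by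
  simp only [jointExp, Finset.sum_mul, Finset.mul_sum]
  rw [Finset.sum_comm_cycle]
  simp only [mul_assoc]

lemma sum_stepDist_mul (T : S → A → S → ℝ) (π : S → A → ℝ) (μ V : S → ℝ) :
    ∑ s', stepDist T π μ s' * V s' = jointExp μ π fun s a => ∑ s', T s a s' * V s' := by
  simp only [stepDist, jointExp, Finset.sum_mul, Finset.mul_sum]
  rw [← Finset.sum_comm_cycle]
  simp only [mul_assoc]

lemma IsDist.le_one {μ : S → ℝ} (hμ : IsDist μ) (s : S) : μ s ≤ 1 :=
  hμ.2 ▸ Finset.single_le_sum (fun i _ => hμ.1 i) (Finset.mem_univ s)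

lemma isDist_dirac (s₀ : S) : IsDist (dirac s₀) :=
  ⟨fun s => by unfold dirac; split_ifs <;> norm_num, by simp [dirac]⟩

lemma jointExp_const {μ : S → ℝ} {π : S → A → ℝ} (hμ : IsDist μ) (hπ : IsPolicy π) (c : ℝ) :
    jointExp μ π (fun _ _ => c) = c := by
  simp only [jointExp, mul_assoc, ← Finset.mul_sum, ← Finset.sum_mul, hπ.2, one_mul, hμ.2]

lemma isDist_stepDist {T : S → A → S → ℝ} {π : S → A → ℝ} {μ : S → ℝ}
    (hT : IsKernel T) (hπ : IsPolicy π) (hμ : IsDist μ) : IsDist (stepDist T π μ) := by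
  refine ⟨fun s' => Finset.sum_nonneg fun s _ => Finset.sum_nonneg fun a _ =>
    mul_nonneg (mul_nonneg (hμ.1 s) (hπ.1 s a)) (hT.1 s a s'), ?_⟩
  simpa [hT.2, jointExp_const hμ hπ] using sum_stepDist_mul T π μ fun _ => 1

lemma isDist_stateDist {T : S → A → S → ℝ} {π : S → A → ℝ} {μ : S → ℝ}
    (hT : IsKernel T) (hπ : IsPolicy π) (hμ : IsDist μ) (t : ℕ) :
    IsDist (stateDist T π μ t) := by
  induction t with
  | zero => exact hμ
  | succ t ih => exact isDist_stepDist hT hπ ih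

lemma abs_sum_mul_le_sum_abs {X : Type*} [Fintype X] {w : X → ℝ} (hw : IsDist w)
    (f : X → ℝ) : |∑ x, w x * f x| ≤ ∑ x, |f x| :=
  (Finset.abs_sum_le_sum_abs _ _).trans <| Finset.sum_le_sum fun x _ => by
    rw [abs_mul, abs_of_nonneg (hw.1 x)]
    exact mul_le_of_le_one_left (abs_nonneg _) (hw.le_one x)

lemma abs_jointExp_le {μ : S → ℝ} {π : S → A → ℝ} (hμ : IsDist μ) (hπ : IsPolicy π)
    (f : S → A → ℝ) : |jointExp μ π f| ≤ ∑ s, ∑ a, |f s a| := by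
  have hsplit : jointExp μ π f = ∑ s, μ s * ∑ a, π s a * f s a := by
    simp only [jointExp, Finset.mul_sum, mul_assoc]
  rw [hsplit]
  exact (abs_sum_mul_le_sum_abs hμ _).trans <| Finset.sum_le_sum fun s _ =>
    abs_sum_mul_le_sum_abs ⟨hπ.1 s, hπ.2 s⟩ _

lemma summable_pow_mul_of_abs_le {γ : ℝ} (hγ0 : 0 ≤ γ) (hγ1 : γ < 1) {g : ℕ → ℝ} {C : ℝ}
    (hg : ∀ t, |g t| ≤ C) : Summable fun t => γ ^ t * g t := by
  refine Summable.of_norm_bounded ((summable_geometric_of_lt_one hγ0 hγ1).mul_right C)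
    fun t => ?_
  rw [Real.norm_eq_abs, abs_mul, abs_pow, abs_of_nonneg hγ0]
  exact mul_le_mul_of_nonneg_left (hg t) (pow_nonneg hγ0 t)

lemma summable_pow_mul_jointExp {γ : ℝ} (hγ0 : 0 ≤ γ) (hγ1 : γ < 1) {T : S → A → S → ℝ}
    {π : S → A → ℝ} {μ : S → ℝ} (hT : IsKernel T) (hπ : IsPolicy π) (hμ : IsDist μ)
    (f : S → A → ℝ) :
    Summable fun t => γ ^ t * jointExp (stateDist T π μ t) π f :=
  summable_pow_mul_of_abs_le hγ0 hγ1 fun t => abs_jointExp_le (isDist_stateDist hT hπ hμ t) hπ f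

lemma ret_eq_tsum_jointExp (γ : ℝ) (T : S → A → S → ℝ) (π : S → A → ℝ) (μ : S → ℝ)
    (r : S → A → ℝ) : ret γ T π μ r = ∑' t, γ ^ t * jointExp (stateDist T π μ t) π r :=
  rfl

lemma value_eq_ret_dirac (γ : ℝ) (T : S → A → S → ℝ) (π : S → A → ℝ) (r : S → A → ℝ)
    (s₀ : S) : value γ T π r s₀ = ret γ T π (dirac s₀) r :=
  rfl

lemma stateDist_eq_sum_dirac (T : S → A → S → ℝ) (π : S → A → ℝ) (μ : S → ℝ) (t : ℕ) :
    stateDist T π μ t = fun s => ∑ s₀, μ s₀ * stateDist T π (dirac s₀) t s := by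
  induction t with
  | zero => funext s; simp [stateDist, dirac]
  | succ t ih =>
    funext s'
    simp only [stateDist_succ, stepDist]
    rw [ih, jointExp_sum_mul_left]

lemma ret_eq_sum_mul_value {γ : ℝ} (hγ0 : 0 ≤ γ) (hγ1 : γ < 1) {T : S → A → S → ℝ}
    {π : S → A → ℝ} (hT : IsKernel T) (hπ : IsPolicy π) (μ : S → ℝ) (r : S → A → ℝ) :
    ret γ T π μ r = ∑ s₀, μ s₀ * value γ T π r s₀ := by
  have hsummable (s₀ : S) :=
    summable_pow_mul_jointExp hγ0 hγ1 hT hπ (isDist_dirac s₀) r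
  simp only [value_eq_ret_dirac, ret_eq_tsum_jointExp, ← tsum_mul_left]
  rw [← Summable.tsum_finsetSum fun s₀ _ => (hsummable s₀).mul_left (μ s₀)]
  refine tsum_congr fun t => ?_
  rw [stateDist_eq_sum_dirac, jointExp_sum_mul_left, Finset.mul_sum]
  exact Finset.sum_congr rfl fun s₀ _ => by ring

lemma ret_eq_jointExp_add {γ : ℝ} (hγ0 : 0 ≤ γ) (hγ1 : γ < 1) {T : S → A → S → ℝ}
    {π : S → A → ℝ} {μ : S → ℝ} (hT : IsKernel T) (hπ : IsPolicy π) (hμ : IsDist μ)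
    (r : S → A → ℝ) :
    ret γ T π μ r = jointExp μ π r + γ * ret γ T π (stepDist T π μ) r := by
  rw [ret_eq_tsum_jointExp, (summable_pow_mul_jointExp hγ0 hγ1 hT hπ hμ r).tsum_eq_zero_add,
    ret_eq_tsum_jointExp, ← tsum_mul_left]
  congr 1
  · rw [pow_zero, one_mul]
    rfl
  · exact tsum_congr fun t => by rw [stateDist_succ', pow_succ]; ring

lemma sum_mul_value_eq {γ : ℝ} (hγ0 : 0 ≤ γ) (hγ1 : γ < 1) {T : S → A → S → ℝ}
    {π : S → A → ℝ} {μ : S → ℝ} (hT : IsKernel T) (hπ : IsPolicy π) (hμ : IsDist μ)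
    (r : S → A → ℝ) :
    ∑ s, μ s * value γ T π r s
      = jointExp μ π r + γ * jointExp μ π fun s a => ∑ s', T s a s' * value γ T π r s' := by
  rw [← ret_eq_sum_mul_value hγ0 hγ1 hT hπ, ret_eq_jointExp_add hγ0 hγ1 hT hπ hμ,
    ret_eq_sum_mul_value hγ0 hγ1 hT hπ, sum_stepDist_mul]

lemma tsum_sub_succ_eq {G : Type*} [NormedAddCommGroup G] {b : ℕ → G} (hb : Summable b) :
    ∑' t, (b t - b (t + 1)) = b 0 := by
  rw [hb.tsum_sub ((summable_nat_add_iff 1).2 hb), hb.tsum_eq_zero_add, add_sub_cancel_right]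

lemma ret_eq_ret_sub_Gpi {γ : ℝ} (hγ0 : 0 ≤ γ) (hγ1 : γ < 1) {T Th : S → A → S → ℝ}
    {π : S → A → ℝ} {μ₀ : S → ℝ} (hT : IsKernel T) (hTh : IsKernel Th) (hπ : IsPolicy π)
    (hμ : IsDist μ₀) (r : S → A → ℝ) :
    ret γ T π μ₀ r = ret γ Th π μ₀ r - γ * ret γ Th π μ₀ (Gpi γ T Th π r) := by
  have hd (t : ℕ) : IsDist (stateDist Th π μ₀ t) := isDist_stateDist hTh hπ hμ t
  set b : ℕ → ℝ := fun t => γ ^ t * ∑ s, stateDist Th π μ₀ t s * value γ T π r s with hb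
  have hsummable : Summable b :=
    summable_pow_mul_of_abs_le hγ0 hγ1 fun t => abs_sum_mul_le_sum_abs (hd t) _
  have hGpi (μ : S → ℝ) : jointExp μ π (Gpi γ T Th π r)
      = (jointExp μ π fun s a => ∑ s', Th s a s' * value γ T π r s')
        - jointExp μ π fun s a => ∑ s', T s a s' * value γ T π r s' :=
    jointExp_sub _ _ _ _
  have hstep (t : ℕ) : b t - b (t + 1) = γ ^ t * jointExp (stateDist Th π μ₀ t) π r
      - γ * (γ ^ t * jointExp (stateDist Th π μ₀ t) π (Gpi γ T Th π r)) := by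
    simp only [hb, stateDist_succ, sum_stepDist_mul, hGpi,
      sum_mul_value_eq hγ0 hγ1 hT hπ (hd t), pow_succ]
    ring
  calc ret γ T π μ₀ r = b 0 := by
        simp only [ret_eq_sum_mul_value hγ0 hγ1 hT hπ, hb, pow_zero, one_mul]
        rfl
    _ = ∑' t, (b t - b (t + 1)) := (tsum_sub_succ_eq hsummable).symm
    _ = ret γ Th π μ₀ r - γ * ret γ Th π μ₀ (Gpi γ T Th π r) := by
      simp only [hstep, ret_eq_tsum_jointExp]
      rw [(summable_pow_mul_jointExp hγ0 hγ1 hTh hπ hμ r).tsum_sub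
        ((summable_pow_mul_jointExp hγ0 hγ1 hTh hπ hμ _).mul_left γ), tsum_mul_left]

lemma ret_eq_expOcc {γ : ℝ} (hγ0 : 0 ≤ γ) (hγ1 : γ < 1) {T : S → A → S → ℝ}
    {π : S → A → ℝ} {μ : S → ℝ} (hT : IsKernel T) (hπ : IsPolicy π) (hμ : IsDist μ)
    (f : S → A → ℝ) : ret γ T π μ f = expOcc γ T π μ f := by
  have hsummable (s : S) : Summable fun t => γ ^ t * stateDist T π μ t s :=
    summable_pow_mul_of_abs_le hγ0 hγ1 fun t => by
      rw [abs_of_nonneg ((isDist_stateDist hT hπ hμ t).1 s)]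
      exact (isDist_stateDist hT hπ hμ t).le_one s
  have hterm (t : ℕ) : γ ^ t * jointExp (stateDist T π μ t) π f
      = ∑ s, ∑ a, π s a * f s a * (γ ^ t * stateDist T π μ t s) := by
    simp only [jointExp, Finset.mul_sum]
    exact Finset.sum_congr rfl fun s _ => Finset.sum_congr rfl fun a _ => by ring
  simp only [ret_eq_tsum_jointExp, hterm, expOcc, occupancy]
  rw [Summable.tsum_finsetSum fun s _ => summable_sum fun a _ => (hsummable s).mul_left _]
  refine Finset.sum_congr rfl fun s _ => ?_
  rw [Summable.tsum_finsetSum fun a _ => (hsummable s).mul_left _]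
  exact Finset.sum_congr rfl fun a _ => by rw [tsum_mul_left]; ring

lemma occupancy_nonneg {γ : ℝ} (hγ0 : 0 ≤ γ) {T : S → A → S → ℝ} {π : S → A → ℝ}
    {μ : S → ℝ} (hT : IsKernel T) (hπ : IsPolicy π) (hμ : IsDist μ) (s : S) (a : A) :
    0 ≤ occupancy γ T π μ s a :=
  mul_nonneg (hπ.1 s a) <| tsum_nonneg fun t =>
    mul_nonneg (pow_nonneg hγ0 t) ((isDist_stateDist hT hπ hμ t).1 s)

lemma abs_expOcc_le {γ : ℝ} (hγ0 : 0 ≤ γ) {T : S → A → S → ℝ} {π : S → A → ℝ}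
    {μ : S → ℝ} (hT : IsKernel T) (hπ : IsPolicy π) (hμ : IsDist μ) {f g : S → A → ℝ}
    (hfg : ∀ s a, |f s a| ≤ g s a) : |expOcc γ T π μ f| ≤ expOcc γ T π μ g := by
  refine (Finset.abs_sum_le_sum_abs _ _).trans <| Finset.sum_le_sum fun s _ =>
    (Finset.abs_sum_le_sum_abs _ _).trans <| Finset.sum_le_sum fun a _ => ?_
  rw [abs_mul, abs_of_nonneg (occupancy_nonneg hγ0 hT hπ hμ s a)]
  exact mul_le_mul_of_nonneg_left (hfg s a) (occupancy_nonneg hγ0 hT hπ hμ s a)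

lemma expOcc_sub (γ : ℝ) (T : S → A → S → ℝ) (π : S → A → ℝ) (μ : S → ℝ)
    (f g : S → A → ℝ) :
    expOcc γ T π μ (fun s a => f s a - g s a) = expOcc γ T π μ f - expOcc γ T π μ g := by
  simp only [expOcc, mul_sub, Finset.sum_sub_distrib]

lemma expOcc_const_mul (γ : ℝ) (T : S → A → S → ℝ) (π : S → A → ℝ) (μ : S → ℝ) (c : ℝ)
    (f : S → A → ℝ) : expOcc γ T π μ (fun s a => c * f s a) = c * expOcc γ T π μ f := by
  simp only [expOcc, Finset.mul_sum, mul_left_comm]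

lemma expOcc_eq_zero_of_support {γ : ℝ} {T : S → A → S → ℝ} {π : S → A → ℝ} {μ : S → ℝ}
    {f : S → A → ℝ} (hf : ∀ s a, occupancy γ T π μ s a ≠ 0 → f s a = 0) :
    expOcc γ T π μ f = 0 :=
  Finset.sum_eq_zero fun s _ => Finset.sum_eq_zero fun a _ => by
    by_cases hocc : occupancy γ T π μ s a = 0
    · rw [hocc, zero_mul]
    · rw [hf s a hocc, mul_zero]

lemma abs_ret_sub_expOcc_le {γ : ℝ} (hγ0 : 0 ≤ γ) (hγ1 : γ < 1) {T Th : S → A → S → ℝ}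
    {π : S → A → ℝ} {μ₀ : S → ℝ} (hT : IsKernel T) (hTh : IsKernel Th) (hπ : IsPolicy π)
    (hμ : IsDist μ₀) {r u : S → A → ℝ} {lam : ℝ}
    (hadm : ∀ s a, γ * |Gpi γ T Th π r s a| ≤ lam * u s a) :
    |ret γ T π μ₀ r - expOcc γ Th π μ₀ r| ≤ lam * expOcc γ Th π μ₀ u := by
  have hsim := ret_eq_ret_sub_Gpi hγ0 hγ1 hT hTh hπ hμ r
  rw [ret_eq_expOcc hγ0 hγ1 hTh hπ hμ, ret_eq_expOcc hγ0 hγ1 hTh hπ hμ,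
    ← expOcc_const_mul] at hsim
  rw [hsim, sub_sub_cancel_left, abs_neg, ← expOcc_const_mul]
  exact abs_expOcc_le hγ0 hTh hπ hμ fun s a => by
    rw [abs_mul, abs_of_nonneg hγ0]
    exact hadm s a

theorem mopo_vs_optimal_general (γ : ℝ) (hγ0 : 0 < γ) (hγ1 : γ < 1)
    (T Th : S → A → S → ℝ) (hT : IsKernel T) (hTh : IsKernel Th)
    (μ0 : S → ℝ) (hμ : IsDist μ0) (r : S → A → ℝ)
    (u : S → A → ℝ) (lam : ℝ)
    (hadm : ∀ π : S → A → ℝ, IsPolicy π → ∀ s a, γ * |Gpi γ T Th π r s a| ≤ lam * u s a)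
    (πhat : S → A → ℝ) (hπhat : IsPolicy πhat)
    (hopt : ∀ π : S → A → ℝ, IsPolicy π →
      expOcc γ Th π μ0 (fun s a => r s a - lam * u s a)
        ≤ expOcc γ Th πhat μ0 (fun s a => r s a - lam * u s a))
    (πstar : S → A → ℝ) (hπstar : IsPolicy πstar)
    (hstaropt : ∀ π : S → A → ℝ, IsPolicy π → ret γ T π μ0 r ≤ ret γ T πstar μ0 r) :
    ret γ T πhat μ0 r ≥ ret γ T πstar μ0 r - 2 * lam * expOcc γ Th πstar μ0 u ∧
      ((∀ s a, occupancy γ Th πstar μ0 s a ≠ 0 → u s a = 0) →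
        ret γ T πhat μ0 r = ret γ T πstar μ0 r) := by
  have hmodel (π : S → A → ℝ) (hπ : IsPolicy π) :=
    abs_le.mp (abs_ret_sub_expOcc_le hγ0.le hγ1 hT hTh hπ hμ (hadm π hπ))
  obtain ⟨hhat, -⟩ := hmodel πhat hπhat
  obtain ⟨-, hstar⟩ := hmodel πstar hπstar
  have hpenalized := hopt πstar hπstar
  rw [expOcc_sub, expOcc_sub, expOcc_const_mul, expOcc_const_mul] at hpenalized
  have hlower : ret γ T πhat μ0 r ≥ ret γ T πstar μ0 r - 2 * lam * expOcc γ Th πstar μ0 u := by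
    linarith
  refine ⟨hlower, fun hsupport => le_antisymm (hstaropt πhat hπhat) ?_⟩
  simpa [expOcc_eq_zero_of_support hsupport] using hlower

/-- Comparison with the optimal policy: η_M(π̂) ≥ η_M(π*) − 2λ·ε_u(π*), with equality of
returns when u vanishes on the support of ρ^{π*}_T̂. -/
theorem mopo_vs_optimal (γ : ℝ) (hγ0 : 0 < γ) (hγ1 : γ < 1)
    (T Th : S → A → S → ℝ) (hT : IsKernel T) (hTh : IsKernel Th)
    (μ0 : S → ℝ) (hμ : IsDist μ0) (r : S → A → ℝ)
    (u : S → A → ℝ) (hu : ∀ s a, 0 ≤ u s a) (lam : ℝ) (hlam : 0 < lam)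
    (hadm : ∀ π : S → A → ℝ, IsPolicy π → ∀ s a, γ * |Gpi γ T Th π r s a| ≤ lam * u s a)
    (πhat : S → A → ℝ) (hπhat : IsPolicy πhat)
    (hopt : ∀ π : S → A → ℝ, IsPolicy π →
      expOcc γ Th π μ0 (fun s a => r s a - lam * u s a)
        ≤ expOcc γ Th πhat μ0 (fun s a => r s a - lam * u s a))
    (πstar : S → A → ℝ) (hπstar : IsPolicy πstar)
    (hstaropt : ∀ π : S → A → ℝ, IsPolicy π → ret γ T π μ0 r ≤ ret γ T πstar μ0 r) :
    ret γ T πhat μ0 r ≥ ret γ T πstar μ0 r - 2 * lam * expOcc γ Th πstar μ0 u ∧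
      ((∀ s a, occupancy γ Th πstar μ0 s a ≠ 0 → u s a = 0) →
        ret γ T πhat μ0 r = ret γ T πstar μ0 r) :=
  mopo_vs_optimal_general γ hγ0 hγ1 T Th hT hTh μ0 hμ r u lam hadm πhat hπhat hopt πstar hπstar
    hstaropt

end MDP
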